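/- Let m ∈ (1,2] and assume U satisfies A2(m)(i) and A2(m)(ii). Then there exist R₀ ≥ 0 and δ, η > 0 such that for all q, x, z ∈ ℝ^d with ‖q‖ ≥ R₀ and max(‖q−x‖, ‖q−z‖) ≤ δ‖q‖: D²U(q){∇U(x) ⊗ ∇U(z)} ≥ η‖q‖^{3m−4}. -/

import Mathlib

open Real
open scoped RealInnerProductSpace

/-!
Write `g = ∇U(q)`. On the ball of radius `δ‖q‖ ≤ ‖q‖/2` around `q` the Hessian is
`O(‖q‖^{m-2})`, so there `∇U` moves by `O(δ‖q‖^{m-1})`; integrating the Hessian bound from the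
origin gives `‖g‖ = O(‖q‖^{m-1})`. Hence, by bilinearity, `D²U(q){∇U(x) ⊗ ∇U(z)}` differs from
`D²U(q){g ⊗ g} ≥ A₂‖q‖^{3m-4}` by `O(δ)‖q‖^{3m-4}`, which is absorbed once `δ` is small.
-/

open Filter Topology Metric

theorem one_add_rpow_le_of_half_le {r t s : ℝ} (hr : 0 < r) (ht : r / 2 ≤ t) (hs : s ≤ 0) :
    (1 + t) ^ s ≤ 2 ^ (-s) * r ^ s := by
  calc (1 + t) ^ s ≤ (r / 2) ^ s := rpow_le_rpow_of_nonpos (by positivity) (by linarith) hs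
    _ = 2 ^ (-s) * r ^ s := by
      rw [div_rpow hr.le zero_le_two, rpow_neg zero_le_two, div_eq_inv_mul]

section Calculus

variable {E F : Type*} [NormedAddCommGroup E] [NormedSpace ℝ E]
  [NormedAddCommGroup F] [NormedSpace ℝ F] {U : E → F} {A C s : ℝ}

theorem norm_fderiv_fderiv_eq_norm_iteratedFDeriv_two (U : E → F) (x : E) :
    ‖fderiv ℝ (fderiv ℝ U) x‖ = ‖iteratedFDeriv ℝ 2 U x‖ := by
  rw [← norm_iteratedFDeriv_fderiv, norm_iteratedFDeriv_one]

theorem Convex.norm_fderiv_sub_le_of_norm_iteratedFDeriv_two_le (hU : ContDiff ℝ 2 U)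
    {t : Set E} (ht : Convex ℝ t) (hC : ∀ w ∈ t, ‖iteratedFDeriv ℝ 2 U w‖ ≤ C)
    {x y : E} (hx : x ∈ t) (hy : y ∈ t) :
    ‖fderiv ℝ U x - fderiv ℝ U y‖ ≤ C * ‖x - y‖ :=
  ht.norm_image_sub_le_of_norm_fderiv_le
    (fun _ _ => ((hU.fderiv_right le_rfl).differentiable one_ne_zero).differentiableAt)
    (fun w hw => (norm_fderiv_fderiv_eq_norm_iteratedFDeriv_two U w).trans_le (hC w hw)) hy hx

theorem norm_fderiv_sub_fderiv_zero_le (hU : ContDiff ℝ 2 U) (hs : -1 < s) (hA : 0 ≤ A)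
    (hbound : ∀ w, ‖iteratedFDeriv ℝ 2 U w‖ ≤ A * (1 + ‖w‖) ^ s) (q : E) :
    ‖fderiv ℝ U q - fderiv ℝ U 0‖ ≤ A / (s + 1) * (1 + ‖q‖) ^ (s + 1) := by
  have hs1 : 0 < s + 1 := by linarith
  have hdiff : Differentiable ℝ (fderiv ℝ U) :=
    (hU.fderiv_right le_rfl).differentiable one_ne_zero
  have hf (t : ℝ) : HasDerivAt (fun t : ℝ => fderiv ℝ U (t • q) - fderiv ℝ U 0)
      (fderiv ℝ (fderiv ℝ U) (t • q) q) t := by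
    have := (hdiff (t • q)).hasFDerivAt.comp_hasDerivAt t ((hasDerivAt_id t).smul_const q)
    simpa using this.sub_const (fderiv ℝ U 0)
  have hB {t : ℝ} (ht : 0 ≤ t) : HasDerivAt (fun t : ℝ => A / (s + 1) * (1 + t * ‖q‖) ^ (s + 1))
      (A * (1 + t * ‖q‖) ^ s * ‖q‖) t := by
    refine ((((hasDerivAt_mul_const ‖q‖).const_add 1).rpow_const (p := s + 1)
      (Or.inl (by positivity))).const_mul _).congr_deriv ?_
    field_simp
    simp
  have hf' {t : ℝ} (ht : 0 ≤ t) :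
      ‖fderiv ℝ (fderiv ℝ U) (t • q) q‖ ≤ A * (1 + t * ‖q‖) ^ s * ‖q‖ := by
    calc ‖fderiv ℝ (fderiv ℝ U) (t • q) q‖ ≤ ‖iteratedFDeriv ℝ 2 U (t • q)‖ * ‖q‖ := by
          rw [← norm_fderiv_fderiv_eq_norm_iteratedFDeriv_two]
          exact ContinuousLinearMap.le_opNorm _ _
      _ ≤ A * (1 + t * ‖q‖) ^ s * ‖q‖ := by
          gcongr
          simpa [norm_smul, abs_of_nonneg ht] using hbound (t • q)
  have := image_norm_le_of_norm_deriv_right_le_deriv_boundary' (a := 0) (b := 1)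
    (fun t _ => (hf t).continuousAt.continuousWithinAt) (fun t _ => (hf t).hasDerivWithinAt)
    (by simpa using div_nonneg hA hs1.le) (fun t ht => (hB ht.1).continuousAt.continuousWithinAt)
    (fun t ht => (hB ht.1).hasDerivWithinAt) (fun t ht => hf' ht.1)
    (Set.right_mem_Icc.2 zero_le_one)
  simpa using this

theorem norm_iteratedFDeriv_two_le_of_mem_closedBall (hs : s ≤ 0) (hA : 0 ≤ A)
    (hbound : ∀ w, ‖iteratedFDeriv ℝ 2 U w‖ ≤ A * (1 + ‖w‖) ^ s) {q w : E} (hq : q ≠ 0)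
    (hw : w ∈ closedBall q (‖q‖ / 2)) :
    ‖iteratedFDeriv ℝ 2 U w‖ ≤ A * 2 ^ (-s) * ‖q‖ ^ s := by
  have hw' : ‖q‖ / 2 ≤ ‖w‖ := by
    have := norm_sub_norm_le q w
    rw [mem_closedBall, dist_eq_norm, norm_sub_rev] at hw
    linarith
  rw [mul_assoc]
  exact (hbound w).trans
    (mul_le_mul_of_nonneg_left (one_add_rpow_le_of_half_le (norm_pos_iff.2 hq) hw' hs) hA)

end Calculus

section Gradient

variable {E : Type*} [NormedAddCommGroup E] [InnerProductSpace ℝ E] [CompleteSpace E]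
  {U : E → ℝ} {A s : ℝ}

theorem norm_gradient_eq_norm_fderiv (U : E → ℝ) (x : E) :
    ‖gradient U x‖ = ‖fderiv ℝ U x‖ :=
  (InnerProductSpace.toDual ℝ E).symm.norm_map _

theorem norm_gradient_sub_gradient (U : E → ℝ) (x y : E) :
    ‖gradient U x - gradient U y‖ = ‖fderiv ℝ U x - fderiv ℝ U y‖ := by
  rw [gradient, gradient, ← map_sub, LinearIsometryEquiv.norm_map]

theorem exists_norm_gradient_le_rpow (hU : ContDiff ℝ 2 U) (hs : -1 < s) (hA : 0 ≤ A)
    (hbound : ∀ w, ‖iteratedFDeriv ℝ 2 U w‖ ≤ A * (1 + ‖w‖) ^ s) :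
    ∃ K, ∀ q : E, 1 ≤ ‖q‖ → ‖gradient U q‖ ≤ K * ‖q‖ ^ (s + 1) := by
  refine ⟨(‖fderiv ℝ U 0‖ + A / (s + 1)) * 2 ^ (s + 1), fun q hq => ?_⟩
  have hs1 : 0 ≤ s + 1 := by linarith
  have hone : 1 ≤ (1 + ‖q‖) ^ (s + 1) := one_le_rpow (by linarith) hs1
  have htwo : (1 + ‖q‖) ^ (s + 1) ≤ 2 ^ (s + 1) * ‖q‖ ^ (s + 1) := by
    rw [← mul_rpow zero_le_two (norm_nonneg q)]
    gcongr
    linarith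
  calc ‖gradient U q‖ ≤ ‖fderiv ℝ U 0‖ + ‖fderiv ℝ U q - fderiv ℝ U 0‖ := by
        rw [norm_gradient_eq_norm_fderiv]; exact norm_le_insert' _ _
    _ ≤ ‖fderiv ℝ U 0‖ * (1 + ‖q‖) ^ (s + 1) + A / (s + 1) * (1 + ‖q‖) ^ (s + 1) := by
        gcongr
        · exact le_mul_of_one_le_right (norm_nonneg _) hone
        · exact norm_fderiv_sub_fderiv_zero_le hU hs hA hbound q
    _ ≤ (‖fderiv ℝ U 0‖ + A / (s + 1)) * 2 ^ (s + 1) * ‖q‖ ^ (s + 1) := by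
        rw [← add_mul, mul_assoc]
        gcongr

theorem norm_gradient_sub_gradient_le (hU : ContDiff ℝ 2 U) (hs : s ≤ 0) (hA : 0 ≤ A)
    (hbound : ∀ w, ‖iteratedFDeriv ℝ 2 U w‖ ≤ A * (1 + ‖w‖) ^ s) {q x : E} (hq : q ≠ 0)
    {δ : ℝ} (hδ : δ ≤ 1 / 2) (hx : ‖x - q‖ ≤ δ * ‖q‖) :
    ‖gradient U x - gradient U q‖ ≤ A * 2 ^ (-s) * δ * ‖q‖ ^ (s + 1) := by
  have hball : closedBall q (δ * ‖q‖) ⊆ closedBall q (‖q‖ / 2) :=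
    closedBall_subset_closedBall (by nlinarith [norm_nonneg q])
  have hlip := (convex_closedBall q (δ * ‖q‖)).norm_fderiv_sub_le_of_norm_iteratedFDeriv_two_le
    hU (fun w hw => norm_iteratedFDeriv_two_le_of_mem_closedBall hs hA hbound hq (hball hw))
    (mem_closedBall_iff_norm.2 hx) (mem_closedBall_self (hx.trans' (norm_nonneg _)))
  rw [norm_gradient_sub_gradient]
  calc _ ≤ A * 2 ^ (-s) * ‖q‖ ^ s * ‖x - q‖ := hlip
    _ ≤ A * 2 ^ (-s) * ‖q‖ ^ s * (δ * ‖q‖) := by gcongr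
    _ = A * 2 ^ (-s) * δ * ‖q‖ ^ (s + 1) := by
      rw [rpow_add_one (norm_ne_zero_iff.2 hq)]; ring

end Gradient

section Bilinear

variable {E : Type*} [NormedAddCommGroup E] [NormedSpace ℝ E]

theorem ContinuousLinearMap.norm_apply_apply_sub_le (L : E →L[ℝ] E →L[ℝ] ℝ) (a b g : E) :
    ‖L a b - L g g‖ ≤ ‖L‖ * (‖a - g‖ * ‖b‖ + ‖g‖ * ‖b - g‖) := by
  have hsplit : L a b - L g g = L (a - g) b + L g (b - g) := by
    simp only [map_sub, sub_apply]; abel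
  rw [hsplit, mul_add, ← mul_assoc, ← mul_assoc]
  exact norm_add_le_of_le (L.le_opNorm₂ _ _) (L.le_opNorm₂ _ _)

theorem ContinuousLinearMap.sub_le_apply_apply_of_norm_sub_le (L : E →L[ℝ] E →L[ℝ] ℝ)
    {a b g : E} {β k e : ℝ} (hL : ‖L‖ ≤ β) (hg : ‖g‖ ≤ k) (ha : ‖a - g‖ ≤ e)
    (hb : ‖b - g‖ ≤ e) : L g g - β * e * (2 * k + e) ≤ L a b := by
  have hβ : 0 ≤ β := (norm_nonneg L).trans hL
  have hk : 0 ≤ k := (norm_nonneg g).trans hg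
  have he : 0 ≤ e := (norm_nonneg _).trans ha
  have hb' : ‖b‖ ≤ k + e := (norm_le_insert' b g).trans (add_le_add hg hb)
  have : ‖L a b - L g g‖ ≤ β * e * (2 * k + e) := by
    refine (L.norm_apply_apply_sub_le a b g).trans ?_
    calc ‖L‖ * (‖a - g‖ * ‖b‖ + ‖g‖ * ‖b - g‖) ≤ β * (e * (k + e) + k * e) := by gcongr
      _ = β * e * (2 * k + e) := by ring
  linarith [neg_abs_le (L a b - L g g), Real.norm_eq_abs (L a b - L g g)]

end Bilinear

theorem hessian_gradient_lower_bound_general {d : ℕ}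
    (U : EuclideanSpace ℝ (Fin d) → ℝ) (m : ℝ) (hm : m ∈ Set.Ioc (1 : ℝ) 2)
    (hU : ContDiff ℝ 3 U)
    (A₁ : ℝ) (hA₁ : 0 ≤ A₁)
    (hD : ∀ q : EuclideanSpace ℝ (Fin d),
      ‖iteratedFDeriv ℝ 2 U q‖ ≤ A₁ * (1 + ‖q‖) ^ (m - 2) ∧
      ‖iteratedFDeriv ℝ 3 U q‖ ≤ A₁ * (1 + ‖q‖) ^ (m - 3))
    (A₂ : ℝ) (hA₂ : 0 < A₂) (R : ℝ)
    (hhess : ∀ q : EuclideanSpace ℝ (Fin d), R ≤ ‖q‖ →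
      A₂ * ‖q‖ ^ (3 * m - 4) ≤
        iteratedFDeriv ℝ 2 U q ![gradient U q, gradient U q]) :
    ∃ R₀ ≥ (0 : ℝ), ∃ δ > (0 : ℝ), ∃ η > (0 : ℝ),
      ∀ q x z : EuclideanSpace ℝ (Fin d), R₀ ≤ ‖q‖ →
        max ‖q - x‖ ‖q - z‖ ≤ δ * ‖q‖ →
        η * ‖q‖ ^ (3 * m - 4) ≤
          iteratedFDeriv ℝ 2 U q ![gradient U x, gradient U z] := by
  obtain ⟨hm1, hm2⟩ := hm
  have hU2 : ContDiff ℝ 2 U := hU.of_le (by norm_num)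
  have hbound (w : EuclideanSpace ℝ (Fin d)) := (hD w).1
  obtain ⟨K, hK⟩ := exists_norm_gradient_le_rpow hU2 (by linarith) hA₁ hbound
  set c := A₁ * 2 ^ (-(m - 2))
  set φ : ℝ → ℝ := fun δ => c * (c * δ) * (2 * K + c * δ)
  obtain ⟨δ, hφδ, hδ0, hδ⟩ : ∃ δ, φ δ < A₂ ∧ δ ∈ Set.Ioo 0 (1 / 2) := by
    have hφ : Tendsto φ (𝓝[>] 0) (𝓝 0) := by
      simpa [φ] using ((by fun_prop : Continuous φ).tendsto 0).mono_left nhdsWithin_le_nhds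
    exact ((hφ.eventually (gt_mem_nhds hA₂)).and (Ioo_mem_nhdsGT one_half_pos)).exists
  refine ⟨max R 1, le_max_of_le_right zero_le_one, δ, hδ0, A₂ - φ δ, sub_pos.2 hφδ,
    fun q x z hq hxz => ?_⟩
  have hq1 : 1 ≤ ‖q‖ := le_of_max_le_right hq
  have hq0 : q ≠ 0 := norm_pos_iff.1 (by linarith)
  have hL := norm_iteratedFDeriv_two_le_of_mem_closedBall (by linarith) hA₁ hbound hq0
    (mem_closedBall_self (by positivity))
  rw [← norm_fderiv_fderiv_eq_norm_iteratedFDeriv_two] at hL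
  have hx := norm_gradient_sub_gradient_le hU2 (by linarith) hA₁ hbound hq0 hδ.le
    (norm_sub_rev q x ▸ le_of_max_le_left hxz)
  have hz := norm_gradient_sub_gradient_le hU2 (by linarith) hA₁ hbound hq0 hδ.le
    (norm_sub_rev q z ▸ le_of_max_le_right hxz)
  have hexpand := (fderiv ℝ (fderiv ℝ U) q).sub_le_apply_apply_of_norm_sub_le hL
    (hK q hq1) hx hz
  have herr : c * ‖q‖ ^ (m - 2) * (c * δ * ‖q‖ ^ (m - 2 + 1))
      * (2 * (K * ‖q‖ ^ (m - 2 + 1)) + c * δ * ‖q‖ ^ (m - 2 + 1)) = φ δ * ‖q‖ ^ (3 * m - 4) := by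
    have hpow : ‖q‖ ^ (3 * m - 4) = ‖q‖ ^ (m - 2) * ‖q‖ ^ (m - 2 + 1) * ‖q‖ ^ (m - 2 + 1) := by
      rw [← rpow_add (by positivity), ← rpow_add (by positivity)]; ring_nf
    rw [hpow]; ring
  simp only [iteratedFDeriv_two_apply, Matrix.cons_val_zero, Matrix.cons_val_one] at hhess ⊢
  linarith [hhess q (le_of_max_le_left hq)]

/-- under A2(m)(i)–(ii) (together with A2(m)(iii), which the proof uses),
the curvature lower bound `D²U(q){∇U(x) ⊗ ∇U(z)} ≥ η‖q‖^{3m−4}` holds whenever `x` and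
`z` are within a small relative distance of `q` and `‖q‖` is large. -/
theorem hessian_gradient_lower_bound {d : ℕ}
    (U : EuclideanSpace ℝ (Fin d) → ℝ) (m : ℝ) (hm : m ∈ Set.Ioc (1 : ℝ) 2)
    (hU : ContDiff ℝ 3 U)
    (A₁ : ℝ) (hA₁ : 0 ≤ A₁)
    (hD : ∀ q : EuclideanSpace ℝ (Fin d),
      ‖iteratedFDeriv ℝ 2 U q‖ ≤ A₁ * (1 + ‖q‖) ^ (m - 2) ∧
      ‖iteratedFDeriv ℝ 3 U q‖ ≤ A₁ * (1 + ‖q‖) ^ (m - 3))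
    (A₂ : ℝ) (hA₂ : 0 < A₂) (R : ℝ) (hR : 0 ≤ R)
    (hhess : ∀ q : EuclideanSpace ℝ (Fin d), R ≤ ‖q‖ →
      A₂ * ‖q‖ ^ (3 * m - 4) ≤
        iteratedFDeriv ℝ 2 U q ![gradient U q, gradient U q])
    (A₃ : ℝ) (hA₃ : 0 < A₃) (A₄ : ℝ)
    (hinner : ∀ q : EuclideanSpace ℝ (Fin d), A₃ * ‖q‖ ^ m - A₄ ≤ ⟪gradient U q, q⟫) :
    ∃ R₀ ≥ (0 : ℝ), ∃ δ > (0 : ℝ), ∃ η > (0 : ℝ),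
      ∀ q x z : EuclideanSpace ℝ (Fin d), R₀ ≤ ‖q‖ →
        max ‖q - x‖ ‖q - z‖ ≤ δ * ‖q‖ →
        η * ‖q‖ ^ (3 * m - 4) ≤
          iteratedFDeriv ℝ 2 U q ![gradient U x, gradient U z] :=
  hessian_gradient_lower_bound_general U m hm hU A₁ hA₁ hD A₂ hA₂ R hhess
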